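/- Liveness of PoA&I for aggregated models under the ε-closeness assumption: if a correct server p broadcasts its model w_p to all servers, every correct server q validates w_p (since w_p is ε-close to w_q by pairwise ε-closeness of correct models) and broadcasts a signature on h(w_p); hence, with at least f_s + 1 correct servers, a PoA&I for w_p is eventually produced. -/
import Mathlib


/-- Liveness of PoA&I for aggregated models under the ε-closeness assumption:
with `2f+1` servers and at most `f` Byzantine, if a correct server `p`
broadcasts its model `wmod p` (reliably delivered to every correct server),
correct servers' models are pairwise ε-close, and a correct server signs any
delivered model ε-close to its own model, then every correct server signs
`wmod p` and a PoA&I (`f+1` distinct correct signatures) for `wmod p` is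
produced. -/
theorem poai_liveness_model {σ : Type*} [DecidableEq σ] (d f : ℕ)
    (S Byz : Finset σ) (hS : S.card = 2 * f + 1)
    (hBsub : Byz ⊆ S) (hBcard : Byz.card ≤ f)
    (eps : Fin d → ℝ) (heps : ∀ i, 0 ≤ eps i)
    (wmod : σ → Fin d → ℝ)
    (hpair : ∀ q ∈ S \ Byz, ∀ q' ∈ S \ Byz, ∀ i, |wmod q i - wmod q' i| ≤ eps i)
    (delivered : (Fin d → ℝ) → σ → Prop)
    (signs : σ → (Fin d → ℝ) → Prop)
    (p : σ) (hp : p ∈ S \ Byz)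
    (hdeliv : ∀ q ∈ S \ Byz, delivered (wmod p) q)
    (hsign : ∀ q ∈ S \ Byz, ∀ w, delivered w q →
      (∀ i, |w i - wmod q i| ≤ eps i) → signs q w) :
    (∀ q ∈ S \ Byz, signs q (wmod p)) ∧
    ∃ sigs : Finset σ, sigs ⊆ S \ Byz ∧ sigs.card = f + 1 ∧
      ∀ q ∈ sigs, signs q (wmod p) := by
  have hall : ∀ q ∈ S \ Byz, signs q (wmod p) := fun q hq =>
    hsign q hq _ (hdeliv q hq) (fun i => hpair p hp q hq i)
  refine ⟨hall, ?_⟩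
  have hcard : f + 1 ≤ (S \ Byz).card := by
    have := Finset.card_sdiff_of_subset hBsub
    omega
  obtain ⟨sigs, hsub, hc⟩ := Finset.exists_subset_card_eq hcard
  exact ⟨sigs, hsub, hc, fun q hq => hall q (hsub hq)⟩
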